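/- arXiv:1005.2816 — 3 statements merged into one kernel-verified Lean document; each statement's English description precedes it below -/
import Mathlib

section
/- For all positive integers m ≤ n, the upper oriented chromatic number of the complete bipartite graph K_{m,n} is at most m + 2^m. -/
/-- An oriented graph: a loopless digraph with no opposite arcs. -/
structure OrientedGraph (V : Type*) where
  Adj : V → V → Prop
  asymm : ∀ u v, Adj u v → ¬ Adj v u

namespace OrientedGraph

theorem irrefl {V : Type*} (G : OrientedGraph V) (u : V) : ¬ G.Adj u u :=
  fun h => G.asymm u u h h

/-- A homomorphism of oriented graphs maps arcs to arcs. -/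
def IsHom {V W : Type*} (G : OrientedGraph V) (H : OrientedGraph W) (f : V → W) : Prop :=
  ∀ u v, G.Adj u v → H.Adj (f u) (f v)

/-- The oriented chromatic number of an oriented graph: the minimum order of an
oriented graph to which it admits a homomorphism. -/
noncomputable def ochrom {V : Type*} (G : OrientedGraph V) : ℕ :=
  sInf {n | ∃ T : OrientedGraph (Fin n), ∃ f : V → Fin n, G.IsHom T f}

end OrientedGraph

/-- `o` is an orientation of the simple graph `G`. -/
def IsOrientation {V : Type*} (G : SimpleGraph V) (o : OrientedGraph V) : Prop :=
  ∀ u v, (o.Adj u v ∨ o.Adj v u) ↔ G.Adj u v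

/-- The oriented chromatic number of an undirected graph: the greatest oriented
chromatic number of its orientations. -/
noncomputable def uochrom {V : Type*} (G : SimpleGraph V) : ℕ :=
  sSup {k | ∃ o : OrientedGraph V, IsOrientation G o ∧ o.ochrom = k}

/-- The upper oriented chromatic number of an undirected graph: the minimum order
of an oriented graph to which every orientation admits a homomorphism. -/
noncomputable def upperOchrom {V : Type*} (G : SimpleGraph V) : ℕ :=
  sInf {n | ∃ U : OrientedGraph (Fin n), ∀ o : OrientedGraph V,
    IsOrientation G o → ∃ f : V → Fin n, o.IsHom U f}

/-- The square of a simple graph: edges between vertices at distance 1 or 2. -/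
def square {V : Type*} (G : SimpleGraph V) : SimpleGraph V where
  Adj u v := u ≠ v ∧ (G.Adj u v ∨ ∃ w, G.Adj u w ∧ G.Adj w v)
  symm := by
    constructor; rintro u v ⟨hne, h | ⟨w, h1, h2⟩⟩
    · exact ⟨hne.symm, Or.inl h.symm⟩
    · exact ⟨hne.symm, Or.inr ⟨w, h2.symm, h1.symm⟩⟩
  loopless := by constructor; rintro u ⟨hne, -⟩; exact hne rfl

/-- Lexicographic product of oriented graphs. -/
def olex {V W : Type*} (G : OrientedGraph V) (H : OrientedGraph W) :
    OrientedGraph (V × W) where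
  Adj p q := G.Adj p.1 q.1 ∨ (p.1 = q.1 ∧ H.Adj p.2 q.2)
  asymm := by
    rintro ⟨u, v⟩ ⟨u', v'⟩ (h | ⟨he, h⟩) (h' | ⟨he', h'⟩)
    · exact G.asymm _ _ h h'
    · subst he'; exact G.irrefl _ h
    · subst he; exact G.irrefl _ h'
    · exact H.asymm _ _ h h'

/-- Strong product of oriented graphs. -/
def ostrong {V W : Type*} (G : OrientedGraph V) (H : OrientedGraph W) :
    OrientedGraph (V × W) where
  Adj p q := (p.1 = q.1 ∧ H.Adj p.2 q.2) ∨ (p.2 = q.2 ∧ G.Adj p.1 q.1) ∨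
    (G.Adj p.1 q.1 ∧ H.Adj p.2 q.2)
  asymm := by
    rintro ⟨u, v⟩ ⟨u', v'⟩ (⟨e, h⟩ | ⟨e, h⟩ | ⟨h1, h2⟩) (⟨e', h'⟩ | ⟨e', h'⟩ | ⟨h1', h2'⟩)
    · exact H.asymm _ _ h h'
    · subst e; exact G.irrefl _ h'
    · exact H.asymm _ _ h h2'
    · subst e'; exact G.irrefl _ h
    · exact G.asymm _ _ h h'
    · exact G.asymm _ _ h h1'
    · subst e'; exact G.irrefl _ h1
    · exact G.asymm _ _ h1 h'
    · exact G.asymm _ _ h1 h1'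

/-- Cartesian product of oriented graphs. -/
def ocart {V W : Type*} (G : OrientedGraph V) (H : OrientedGraph W) :
    OrientedGraph (V × W) where
  Adj p q := (p.1 = q.1 ∧ H.Adj p.2 q.2) ∨ (p.2 = q.2 ∧ G.Adj p.1 q.1)
  asymm := by
    rintro ⟨u, v⟩ ⟨u', v'⟩ (⟨e, h⟩ | ⟨e, h⟩) (⟨e', h'⟩ | ⟨e', h'⟩)
    · exact H.asymm _ _ h h'
    · subst e; exact G.irrefl _ h'
    · subst e'; exact G.irrefl _ h
    · exact G.asymm _ _ h h'

/-- Direct product of oriented graphs. -/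
def odirect {V W : Type*} (G : OrientedGraph V) (H : OrientedGraph W) :
    OrientedGraph (V × W) where
  Adj p q := G.Adj p.1 q.1 ∧ H.Adj p.2 q.2
  asymm := by rintro ⟨u, v⟩ ⟨u', v'⟩ ⟨h1, h2⟩ ⟨h1', h2'⟩; exact G.asymm _ _ h1 h1'

/-- Lexicographic product of simple graphs. -/
def slex {V W : Type*} (G : SimpleGraph V) (H : SimpleGraph W) :
    SimpleGraph (V × W) where
  Adj p q := G.Adj p.1 q.1 ∨ (p.1 = q.1 ∧ H.Adj p.2 q.2)
  symm := by
    constructor; rintro ⟨u, v⟩ ⟨u', v'⟩ (h | ⟨he, h⟩)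
    · exact Or.inl h.symm
    · exact Or.inr ⟨he.symm, h.symm⟩
  loopless := by constructor; rintro ⟨u, v⟩ (h | ⟨-, h⟩); exacts [G.irrefl h, H.irrefl h]

/-- Strong product of simple graphs. -/
def sstrong {V W : Type*} (G : SimpleGraph V) (H : SimpleGraph W) :
    SimpleGraph (V × W) where
  Adj p q := (p.1 = q.1 ∧ H.Adj p.2 q.2) ∨ (p.2 = q.2 ∧ G.Adj p.1 q.1) ∨
    (G.Adj p.1 q.1 ∧ H.Adj p.2 q.2)
  symm := by
    constructor; rintro ⟨u, v⟩ ⟨u', v'⟩ (⟨e, h⟩ | ⟨e, h⟩ | ⟨h1, h2⟩)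
    · exact Or.inl ⟨e.symm, h.symm⟩
    · exact Or.inr (Or.inl ⟨e.symm, h.symm⟩)
    · exact Or.inr (Or.inr ⟨h1.symm, h2.symm⟩)
  loopless := by
    constructor; rintro ⟨u, v⟩ (⟨-, h⟩ | ⟨-, h⟩ | ⟨h, -⟩) <;> first | exact H.irrefl h | exact G.irrefl h

/-- A tournament: an orientation of a complete graph. -/
def IsTournament {V : Type*} (T : OrientedGraph V) : Prop :=
  ∀ u v : V, u ≠ v → T.Adj u v ∨ T.Adj v u

/-- `T` contains every tournament on `n` vertices as a subtournament. -/
def IsUniversal {V : Type*} (n : ℕ) (T : OrientedGraph V) : Prop :=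
  IsTournament T ∧ ∀ S : OrientedGraph (Fin n), IsTournament S →
    ∃ f : Fin n → V, Function.Injective f ∧ ∀ u v, S.Adj u v → T.Adj (f u) (f v)

/-- The directed path on `k` vertices. -/
def dirPath (k : ℕ) : OrientedGraph (Fin k) where
  Adj i j := (i : ℕ) + 1 = (j : ℕ)
  asymm := by intro u v h h'; omega

/-- The directed 3-cycle. -/
def dirC3 : OrientedGraph (ZMod 3) where
  Adj i j := j = i + 1
  asymm := by decide

/-- The circulant tournament T(7;1,2,3). -/
def circT7 : OrientedGraph (ZMod 7) where
  Adj i j := j - i = 1 ∨ j - i = 2 ∨ j - i = 3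
  asymm := by decide
/-- Transport an oriented graph along an equivalence of vertex types. -/
def OrientedGraph.relabel {V W : Type*} (e : V ≃ W) (G : OrientedGraph V) :
    OrientedGraph W where
  Adj a b := G.Adj (e.symm a) (e.symm b)
  asymm := fun a b h h' => G.asymm _ _ h h'

/-- χ_o⁺(K_{m,n}) ≤ m + 2^m for 1 ≤ m ≤ n. -/
theorem upperOchrom_completeBipartite (m n : ℕ) (hm : 1 ≤ m) (hmn : m ≤ n) :
    upperOchrom (completeBipartiteGraph (Fin m) (Fin n)) ≤ m + 2 ^ m := by
  classical
  apply Nat.sInf_le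
  have e : (Fin m ⊕ (Fin m → Bool)) ≃ Fin (m + 2 ^ m) := by
    refine Fintype.equivFinOfCardEq ?_
    simp
  let U0 : OrientedGraph (Fin m ⊕ (Fin m → Bool)) :=
    { Adj := fun p q => match p, q with
        | Sum.inl i, Sum.inr s => s i = true
        | Sum.inr s, Sum.inl i => s i = false
        | _, _ => False
      asymm := by rintro (i | s) (j | t) h h' <;> simp_all }
  refine ⟨U0.relabel e, fun o ho => ?_⟩
  refine ⟨fun v => e (match v with
    | Sum.inl a => Sum.inl a
    | Sum.inr b => Sum.inr (fun a => decide (o.Adj (Sum.inl a) (Sum.inr b)))), ?_⟩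
  rintro (a | b) (a' | b') h
  · have := (ho _ _).mp (Or.inl h); simp at this
  · simp only [OrientedGraph.relabel, Equiv.symm_apply_apply, U0]
    simpa using h
  · simp only [OrientedGraph.relabel, Equiv.symm_apply_apply, U0]
    simpa using o.asymm _ _ h
  · have := (ho _ _).mp (Or.inl h); simp at this
end

section
/- For all positive integers m ≤ n, the oriented chromatic number of the complete bipartite graph K_{m,n} equals m + min(n, 2^m). -/
open OrientedGraph in
lemma upper_aux (m n : ℕ) (o : OrientedGraph (Fin m ⊕ Fin n))
    (ho : IsOrientation (completeBipartiteGraph (Fin m) (Fin n)) o) :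
    ∃ (U : OrientedGraph (Fin (m + min n (2 ^ m))))
      (f : Fin m ⊕ Fin n → Fin (m + min n (2 ^ m))), o.IsHom U f := by
  classical
  set k := min n (2 ^ m) with hk
  set t : Fin n → (Fin m → Bool) := fun b a => decide (o.Adj (.inl a) (.inr b)) with ht
  set R : Finset (Fin m → Bool) := Finset.univ.image t with hR
  have hcard : R.card ≤ k := by
    refine le_min ?_ ?_
    · exact (Finset.card_image_le).trans (by simp)
    · calc R.card ≤ Fintype.card (Fin m → Bool) := R.card_le_univ
        _ = 2 ^ m := by simp
  let c : {x // x ∈ R} ↪ Fin k :=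
    (R.equivFin.toEmbedding).trans (Fin.castLEEmb hcard)
  refine ⟨⟨fun x y =>
      (∃ (s : {x // x ∈ R}) (hx : (x : ℕ) < m),
        (y : ℕ) = m + (c s : ℕ) ∧ (s : Fin m → Bool) ⟨x, hx⟩ = true) ∨
      (∃ (s : {x // x ∈ R}) (hy : (y : ℕ) < m),
        (x : ℕ) = m + (c s : ℕ) ∧ (s : Fin m → Bool) ⟨y, hy⟩ = false), ?_⟩, ?_, ?_⟩
  · rintro x y (⟨s, hx, hy1, hv⟩ | ⟨s, hy, hx1, hv⟩) (⟨s', hx', hy1', hv'⟩ | ⟨s', hy', hx1', hv'⟩)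
    · omega
    · have hss : s = s' := c.injective (Fin.val_injective (by omega))
      subst hss
      exact absurd (hv.symm.trans hv') (by simp)
    · have hss : s = s' := c.injective (Fin.val_injective (by omega))
      subst hss
      exact absurd (hv'.symm.trans hv) (by simp)
    · omega
  · exact fun v => match v with
      | .inl a => ⟨a, by omega⟩
      | .inr b => ⟨m + (c ⟨t b, Finset.mem_image_of_mem t (Finset.mem_univ b)⟩ : ℕ), by
          have := (c ⟨t b, Finset.mem_image_of_mem t (Finset.mem_univ b)⟩).isLt; omega⟩
  · rintro (a | b) (a' | b') huv
    · exact absurd ((ho _ _).mp (Or.inl huv)) (by simp)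
    · refine Or.inl ⟨⟨t b', Finset.mem_image_of_mem t (Finset.mem_univ b')⟩, a.isLt, rfl, ?_⟩
      simpa [ht] using huv
    · refine Or.inr ⟨⟨t b, Finset.mem_image_of_mem t (Finset.mem_univ b)⟩, a'.isLt, rfl, ?_⟩
      simp only [ht]
      exact decide_eq_false (o.asymm _ _ huv)
    · exact absurd ((ho _ _).mp (Or.inl huv)) (by simp)
open OrientedGraph in
lemma lower_aux (m n : ℕ) (hm : 1 ≤ m) (hmn : m ≤ n) :
    ∃ o : OrientedGraph (Fin m ⊕ Fin n),
      IsOrientation (completeBipartiteGraph (Fin m) (Fin n)) o ∧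
      ∀ (N : ℕ) (T : OrientedGraph (Fin N)) (f : Fin m ⊕ Fin n → Fin N),
        o.IsHom T f → m + min n (2 ^ m) ≤ N := by
  classical
  set k := min n (2 ^ m) with hk
  have hmk : m ≤ k := le_min hmn (Nat.le_of_lt (Nat.lt_two_pow_self (n := m)))
  have hkn : k ≤ n := min_le_left _ _
  have hk2 : k ≤ 2 ^ m := min_le_right _ _
  -- indicator types
  let ind : Fin m → (Fin m → Bool) := fun a a' => decide (a = a')
  have hind : Function.Injective ind := by
    intro a a' h
    have := congrFun h a'
    simp [ind] at this
    exact this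
  let Rind : Finset (Fin m → Bool) := Finset.univ.image ind
  have hRcard : Rind.card = m := by
    rw [Finset.card_image_of_injective _ hind, Finset.card_univ, Fintype.card_fin]
  let Cs : Finset (Fin m → Bool) := Finset.univ \ Rind
  have hCs : k - m ≤ Cs.card := by
    have h1 : Cs.card = 2 ^ m - m := by
      rw [Finset.card_sdiff_of_subset (Finset.subset_univ _), Finset.card_univ, hRcard]
      simp
    omega
  obtain ⟨t0, ht0sub, ht0card⟩ := Finset.exists_subset_card_eq hCs
  let e : Fin (k - m) ≃ {x // x ∈ t0} :=
    (Fintype.equivFinOfCardEq (by simp [ht0card])).symm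
  let φ : Fin k → (Fin m → Bool) := fun i =>
    if h : (i : ℕ) < m then ind ⟨i, h⟩
    else (e ⟨(i : ℕ) - m, by have := i.isLt; omega⟩ : Fin m → Bool)
  have hφmem : ∀ (i : Fin k) (h : ¬ (i : ℕ) < m),
      ((e ⟨(i : ℕ) - m, by have := i.isLt; omega⟩ : {x // x ∈ t0}) : Fin m → Bool) ∉ Rind := by
    intro i h
    have hmem : ((e ⟨(i : ℕ) - m, by have := i.isLt; omega⟩ : {x // x ∈ t0}) : Fin m → Bool) ∈ Cs :=
      ht0sub (e _).2
    simp only [Cs, Finset.mem_sdiff] at hmem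
    exact hmem.2
  have hφ : Function.Injective φ := by
    intro i i' hφeq
    simp only [φ] at hφeq
    rcases Nat.lt_or_ge (i : ℕ) m with h | h <;> rcases Nat.lt_or_ge (i' : ℕ) m with h' | h'
    · rw [dif_pos h, dif_pos h'] at hφeq
      have := congrArg Fin.val (hind hφeq)
      exact Fin.val_injective (by simpa using this)
    · rw [dif_pos h, dif_neg (Nat.not_lt.mpr h')] at hφeq
      exact absurd (hφeq ▸ Finset.mem_image_of_mem ind (Finset.mem_univ (⟨i, h⟩ : Fin m)))
        (hφmem i' (Nat.not_lt.mpr h'))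
    · rw [dif_neg (Nat.not_lt.mpr h), dif_pos h'] at hφeq
      exact absurd (hφeq.symm ▸ Finset.mem_image_of_mem ind (Finset.mem_univ (⟨i', h'⟩ : Fin m)))
        (hφmem i (Nat.not_lt.mpr h))
    · rw [dif_neg (Nat.not_lt.mpr h), dif_neg (Nat.not_lt.mpr h')] at hφeq
      have h2 := e.injective (Subtype.coe_injective hφeq)
      have h3 : (i : ℕ) - m = (i' : ℕ) - m := congrArg Fin.val h2
      exact Fin.val_injective (by omega)
  have hφind : ∀ (a : Fin m), φ ⟨a, lt_of_lt_of_le a.isLt hmk⟩ = ind a := by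
    intro a
    simp only [φ, dif_pos a.isLt]
  let τ : Fin n → (Fin m → Bool) := fun b =>
    if h : (b : ℕ) < k then φ ⟨b, h⟩ else φ ⟨0, by omega⟩
  have hτ : ∀ j : Fin k, τ (Fin.castLE hkn j) = φ j := by
    intro j
    simp only [τ, Fin.coe_castLE, dif_pos j.isLt]
  let o : OrientedGraph (Fin m ⊕ Fin n) :=
    ⟨fun u v => match u, v with
      | .inl a, .inr b => τ b a = true
      | .inr b, .inl a => τ b a = false
      | .inl _, .inl _ => False
      | .inr _, .inr _ => False,
     by rintro (a | b) (a' | b') h h' <;> simp_all⟩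
  refine ⟨o, ?_, ?_⟩
  · rintro (a | b) (a' | b')
    · simp; exact ⟨fun h => h, fun h => h⟩
    · constructor
      · intro _; simp
      · intro _; rcases Bool.eq_false_or_eq_true (τ b' a) with h | h
        · exact Or.inl h
        · exact Or.inr h
    · constructor
      · intro _; simp
      · intro _; rcases Bool.eq_false_or_eq_true (τ b a') with h | h
        · exact Or.inr h
        · exact Or.inl h
    · simp; exact ⟨fun h => h, fun h => h⟩
  · intro N T f hf
    have key : ∀ u w v, o.Adj u w → o.Adj w v → f u ≠ f v := by
      intro u w v h1 h2 heq
      refine T.asymm (f u) (f w) (hf _ _ h1) ?_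
      rw [heq]; exact hf _ _ h2
    let g : Fin m ⊕ Fin k → Fin N := fun x => f (Sum.map id (Fin.castLE hkn) x)
    have hg : Function.Injective g := by
      rintro (a | j) (a' | j') hxy
      · congr 1
        by_contra hne
        have hne' : a ≠ a' := fun h => hne (by rw [h])
        set ba : Fin n := ⟨a, lt_of_lt_of_le (lt_of_lt_of_le a.isLt hmk) hkn⟩ with hba
        have h1 : τ ba a = true := by
          have : τ ba = ind a := by
            have : ba = Fin.castLE hkn ⟨a, lt_of_lt_of_le a.isLt hmk⟩ := rfl
            rw [this, hτ, hφind]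
          rw [this]; simp [ind]
        have h2 : τ ba a' = false := by
          have : τ ba = ind a := by
            have : ba = Fin.castLE hkn ⟨a, lt_of_lt_of_le a.isLt hmk⟩ := rfl
            rw [this, hτ, hφind]
          rw [this]; simp [ind]; exact hne'
        exact key (Sum.inl a) (Sum.inr ba) (Sum.inl a') h1 h2 hxy
      · exfalso
        have hxy' : f (Sum.inl a) = f (Sum.inr (Fin.castLE hkn j')) := hxy
        rcases Bool.eq_false_or_eq_true (φ j' a) with hb | hb
        · have h1 : o.Adj (Sum.inl a) (Sum.inr (Fin.castLE hkn j')) := by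
            show τ (Fin.castLE hkn j') a = true; rw [hτ]; exact hb
          have := hf _ _ h1
          exact T.irrefl _ (hxy' ▸ this)
        · have h1 : o.Adj (Sum.inr (Fin.castLE hkn j')) (Sum.inl a) := by
            show τ (Fin.castLE hkn j') a = false; rw [hτ]; exact hb
          have := hf _ _ h1
          exact T.irrefl _ (hxy' ▸ this)
      · exfalso
        have hxy' : f (Sum.inr (Fin.castLE hkn j)) = f (Sum.inl a') := hxy
        rcases Bool.eq_false_or_eq_true (φ j a') with hb | hb
        · have h1 : o.Adj (Sum.inl a') (Sum.inr (Fin.castLE hkn j)) := by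
            show τ (Fin.castLE hkn j) a' = true; rw [hτ]; exact hb
          have := hf _ _ h1
          exact T.irrefl _ (hxy' ▸ this)
        · have h1 : o.Adj (Sum.inr (Fin.castLE hkn j)) (Sum.inl a') := by
            show τ (Fin.castLE hkn j) a' = false; rw [hτ]; exact hb
          have := hf _ _ h1
          exact T.irrefl _ (hxy' ▸ this)
      · congr 1
        by_contra hne
        have hne' : j ≠ j' := fun h => hne (by rw [h])
        have hφne : φ j ≠ φ j' := fun h => hne' (hφ h)
        obtain ⟨a, ha⟩ := Function.ne_iff.mp hφne
        rcases Bool.eq_false_or_eq_true (φ j a) with hb | hb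
        · rcases Bool.eq_false_or_eq_true (φ j' a) with hb' | hb'
          · exact ha (hb.trans hb'.symm)
          · -- path inr j' → inl a → inr j
            have h1 : o.Adj (Sum.inr (Fin.castLE hkn j')) (Sum.inl a) := by
              show τ (Fin.castLE hkn j') a = false; rw [hτ]; exact hb'
            have h2 : o.Adj (Sum.inl a) (Sum.inr (Fin.castLE hkn j)) := by
              show τ (Fin.castLE hkn j) a = true; rw [hτ]; exact hb
            exact key (Sum.inr (Fin.castLE hkn j')) (Sum.inl a) (Sum.inr (Fin.castLE hkn j))
              h1 h2 hxy.symm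
        · rcases Bool.eq_false_or_eq_true (φ j' a) with hb' | hb'
          · have h1 : o.Adj (Sum.inr (Fin.castLE hkn j)) (Sum.inl a) := by
              show τ (Fin.castLE hkn j) a = false; rw [hτ]; exact hb
            have h2 : o.Adj (Sum.inl a) (Sum.inr (Fin.castLE hkn j')) := by
              show τ (Fin.castLE hkn j') a = true; rw [hτ]; exact hb'
            exact key (Sum.inr (Fin.castLE hkn j)) (Sum.inl a) (Sum.inr (Fin.castLE hkn j'))
              h1 h2 hxy
          · exact ha (hb.trans hb'.symm)
    have := Fintype.card_le_of_injective g hg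
    simpa using this
/-- χ_o(K_{m,n}) = m + min(n, 2^m) for 1 ≤ m ≤ n. -/
theorem uochrom_completeBipartite (m n : ℕ) (hm : 1 ≤ m) (hmn : m ≤ n) :
    uochrom (completeBipartiteGraph (Fin m) (Fin n)) = m + min n (2 ^ m) := by
  classical
  obtain ⟨o₀, ho₀, hlow⟩ := lower_aux m n hm hmn
  have hub : ∀ o : OrientedGraph (Fin m ⊕ Fin n),
      IsOrientation (completeBipartiteGraph (Fin m) (Fin n)) o →
      o.ochrom ≤ m + min n (2 ^ m) := by
    intro o ho
    obtain ⟨U, f, hf⟩ := upper_aux m n o ho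
    exact Nat.sInf_le ⟨U, f, hf⟩
  have hlb : o₀.ochrom = m + min n (2 ^ m) := by
    refine le_antisymm (hub _ ho₀) ?_
    refine le_csInf ?_ ?_
    · obtain ⟨U, f, hf⟩ := upper_aux m n o₀ ho₀
      exact ⟨m + min n (2 ^ m), U, f, hf⟩
    · rintro N ⟨T, f, hf⟩
      exact hlow N T f hf
  have hmem : m + min n (2 ^ m) ∈
      {k | ∃ o : OrientedGraph (Fin m ⊕ Fin n),
        IsOrientation (completeBipartiteGraph (Fin m) (Fin n)) o ∧ o.ochrom = k} :=
    ⟨o₀, ho₀, hlb⟩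
  have hbdd : ∀ x ∈ {k | ∃ o : OrientedGraph (Fin m ⊕ Fin n),
      IsOrientation (completeBipartiteGraph (Fin m) (Fin n)) o ∧ o.ochrom = k},
      x ≤ m + min n (2 ^ m) := by
    rintro x ⟨o, ho, rfl⟩
    exact hub o ho
  exact le_antisymm (csSup_le ⟨_, hmem⟩ hbdd) (le_csSup ⟨_, hbdd⟩ hmem)
end

section
/- Let G and H be undirected graphs, let k be the chromatic number of G^2 and n = |V(H)|. Then the upper oriented chromatic number of the lexicographic product G[H] is at most k·(n+2^n)^(k-1)·χ_o^+(H). -/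
def otransfer {L M : Type*} (e : L ≃ M) (U : OrientedGraph L) : OrientedGraph M where
  Adj i j := U.Adj (e.symm i) (e.symm j)
  asymm := fun u v h h' => U.asymm _ _ h h'

lemma mem_upperSet {X L : Type*} [Fintype L] (G' : SimpleGraph X) (U : OrientedGraph L)
    (h : ∀ o : OrientedGraph X, IsOrientation G' o → ∃ f, o.IsHom U f) :
    Fintype.card L ∈ {n | ∃ U : OrientedGraph (Fin n), ∀ o : OrientedGraph X,
      IsOrientation G' o → ∃ f : X → Fin n, o.IsHom U f} := by
  refine ⟨otransfer (Fintype.equivFin L) U, fun o ho => ?_⟩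
  obtain ⟨f, hf⟩ := h o ho
  exact ⟨fun x => Fintype.equivFin L (f x), fun u v huv => by
    simpa [otransfer] using hf u v huv⟩

lemma upperOchrom_le_card {X L : Type*} [Fintype L] (G' : SimpleGraph X) (U : OrientedGraph L)
    (h : ∀ o : OrientedGraph X, IsOrientation G' o → ∃ f, o.IsHom U f) :
    upperOchrom G' ≤ Fintype.card L :=
  Nat.sInf_le (mem_upperSet G' U h)

lemma upperSet_nonempty {W : Type*} [Fintype W] (H : SimpleGraph W) :
    {n | ∃ U : OrientedGraph (Fin n), ∀ o : OrientedGraph W,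
      IsOrientation H o → ∃ f : W → Fin n, o.IsHom U f}.Nonempty := by
  classical
  refine ⟨_, mem_upperSet (L := (W → W → Bool) × W) H
    ⟨fun p r => p.1 = r.1 ∧ p.1 p.2 r.2 = true ∧ p.1 r.2 p.2 = false, ?_⟩ ?_⟩
  · rintro ⟨r, w⟩ ⟨r', w'⟩ ⟨e, h1, h2⟩ ⟨e', h1', h2'⟩
    subst e
    simp only at h1' h2
    rw [h1'] at h2
    exact absurd h2 (by simp)
  · intro o ho
    refine ⟨fun v => (fun a b => decide (o.Adj a b), v), fun u v huv => ?_⟩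
    exact ⟨rfl, decide_eq_true huv, decide_eq_false (o.asymm _ _ huv)⟩

def sigFn (m : ℕ) (a : Fin (m+1)) (j : Fin m) : Fin (m+1) :=
  if j.val < a.val then ⟨j.val, by have := j.isLt; omega⟩
  else ⟨j.val + 1, by have := j.isLt; omega⟩

lemma sigFn_inj {m : ℕ} {a : Fin (m+1)} {j1 j2 : Fin m}
    (h : sigFn m a j1 = sigFn m a j2) : j1 = j2 := by
  have h' := congrArg Fin.val h
  unfold sigFn at h'
  split_ifs at h' <;> (apply Fin.ext; simp only at h'; omega)

lemma sigFn_surj {m : ℕ} {a b : Fin (m+1)} (h : a ≠ b) :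
    ∃ j : Fin m, sigFn m a j = b := by
  have hab : a.val ≠ b.val := fun e => h (Fin.ext e)
  have ha := a.isLt; have hb := b.isLt
  rcases Nat.lt_or_ge b.val a.val with hlt | hge
  · exact ⟨⟨b.val, by omega⟩, by
      unfold sigFn; rw [if_pos (by simpa using hlt)]⟩
  · have hgt : a.val < b.val := by omega
    refine ⟨⟨b.val - 1, by omega⟩, ?_⟩
    unfold sigFn
    rw [if_neg (by simp; omega)]
    exact Fin.ext (by simp; omega)

def lexTarget (m q : ℕ) (UH : OrientedGraph (Fin q)) (W : Type*) [DecidableEq W] :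
    OrientedGraph (Fin (m+1) × (Fin m → W ⊕ Finset W) × Fin q) where
  Adj p r :=
    (p.1 = r.1 ∧ UH.Adj p.2.2 r.2.2) ∨
    (p.1.val < r.1.val ∧ ∃ S : Finset W, ∃ w : W,
      (∃ j, sigFn m p.1 j = r.1 ∧ p.2.1 j = Sum.inr S) ∧
      (∃ j, sigFn m r.1 j = p.1 ∧ r.2.1 j = Sum.inl w) ∧ w ∈ S) ∨
    (r.1.val < p.1.val ∧ ∃ S : Finset W, ∃ v : W,
      (∃ j, sigFn m r.1 j = p.1 ∧ r.2.1 j = Sum.inr S) ∧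
      (∃ j, sigFn m p.1 j = r.1 ∧ p.2.1 j = Sum.inl v) ∧ v ∉ S)
  asymm := by
    rintro ⟨a, t, x⟩ ⟨b, s, y⟩ h h'
    simp only at h h'
    rcases h with ⟨e, h⟩ | ⟨hab, S, w, ⟨j1, hj1, ht1⟩, ⟨j2, hj2, hs2⟩, hw⟩ |
      ⟨hba, S, v, ⟨j1, hj1, hs1⟩, ⟨j2, hj2, ht2⟩, hv⟩
    · rcases h' with ⟨e', h'⟩ | ⟨hab', _⟩ | ⟨hba', _⟩
      · exact UH.asymm _ _ h h'
      · have := congrArg Fin.val e; omega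
      · have := congrArg Fin.val e; omega
    · rcases h' with ⟨e', _⟩ | ⟨hab', _⟩ | ⟨hba', S', v, ⟨j1', hj1', ht1'⟩, ⟨j2', hj2', hs2'⟩, hv'⟩
      · have := congrArg Fin.val e'; omega
      · omega
      · obtain rfl : j1 = j1' := sigFn_inj (hj1.trans hj1'.symm)
        obtain rfl : S = S' := Sum.inr.inj (ht1.symm.trans ht1')
        obtain rfl : j2 = j2' := sigFn_inj (hj2.trans hj2'.symm)
        obtain rfl : w = v := Sum.inl.inj (hs2.symm.trans hs2')
        exact hv' hw
    · rcases h' with ⟨e', _⟩ | ⟨hab', S', w', ⟨j1', hj1', hs1'⟩, ⟨j2', hj2', ht2'⟩, hw'⟩ | ⟨hba', _⟩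
      · have := congrArg Fin.val e'; omega
      · obtain rfl : j1 = j1' := sigFn_inj (hj1.trans hj1'.symm)
        obtain rfl : S = S' := Sum.inr.inj (hs1.symm.trans hs1')
        obtain rfl : j2 = j2' := sigFn_inj (hj2.trans hj2'.symm)
        obtain rfl : v = w' := Sum.inl.inj (ht2.symm.trans ht2')
        exact hv hw'
      · omega

lemma lexTarget_universal {V W : Type*} [Fintype W] [DecidableEq W]
    (G : SimpleGraph V) (H : SimpleGraph W) {m : ℕ}
    (C : SimpleGraph.Coloring (square G) (Fin (m+1)))
    {q : ℕ} (UH : OrientedGraph (Fin q))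
    (hUH : ∀ o : OrientedGraph W, IsOrientation H o → ∃ f : W → Fin q, o.IsHom UH f)
    (o : OrientedGraph (V × W)) (ho : IsOrientation (slex G H) o) :
    ∃ f, o.IsHom (lexTarget m q UH W) f := by
  classical
  have fib : ∀ u : V, IsOrientation H
      ⟨fun v w => o.Adj (u,v) (u,w), fun v w h h' => o.asymm _ _ h h'⟩ := by
    intro u v w
    have h1 := ho (u,v) (u,w)
    simp only [slex] at h1
    rw [h1]
    simp [G.irrefl]
  choose fH hfH using fun u => hUH _ (fib u)
  have key : ∀ (u₀ u₁ u₂ : V), G.Adj u₀ u₁ → G.Adj u₀ u₂ → C u₁ = C u₂ → u₁ = u₂ := by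
    intro u₀ u₁ u₂ h1 h2 he
    by_contra hne
    exact C.valid ⟨hne, Or.inr ⟨u₀, h1.symm, h2⟩⟩ he
  refine ⟨fun p => (C p.1, fun j =>
    if (sigFn m (C p.1) j).val < (C p.1).val then Sum.inl p.2
    else if h : ∃ u', G.Adj p.1 u' ∧ C u' = sigFn m (C p.1) j then
      Sum.inr (Finset.univ.filter fun w => o.Adj p (h.choose, w))
    else Sum.inr ∅, fH p.1 p.2), ?_⟩
  rintro ⟨u, v⟩ ⟨u', w⟩ huv
  have hadj : (slex G H).Adj (u,v) (u',w) := (ho _ _).mp (Or.inl huv)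
  rcases hadj with hG | ⟨he, hH⟩
  · -- between adjacent fibers
    have hsq : (square G).Adj u u' := ⟨hG.ne, Or.inl hG⟩
    have hcc : C u ≠ C u' := C.valid hsq
    have hccv : (C u).val ≠ (C u').val := fun e => hcc (Fin.ext e)
    rcases Nat.lt_or_ge (C u).val (C u').val with hlt | hge
    · -- C u < C u' : second disjunct
      obtain ⟨j1, hj1⟩ := sigFn_surj hcc
      obtain ⟨j2, hj2⟩ := sigFn_surj hcc.symm
      refine Or.inr (Or.inl ⟨hlt, Finset.univ.filter fun w' => o.Adj (u,v) (u', w'), w,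
        ⟨j1, hj1, ?_⟩, ⟨j2, hj2, ?_⟩, ?_⟩)
      · dsimp only
        rw [if_neg (by rw [hj1]; omega)]
        have hex : ∃ u'', G.Adj u u'' ∧ C u'' = sigFn m (C u) j1 :=
          ⟨u', hG, by rw [hj1]⟩
        rw [dif_pos hex]
        have : hex.choose = u' :=
          key u hex.choose u' hex.choose_spec.1 hG (hex.choose_spec.2.trans hj1)
        rw [this]
      · dsimp only
        rw [if_pos (by rw [hj2]; omega)]
      · simp [huv]
    · -- C u' < C u : third disjunct
      have hgt : (C u').val < (C u).val := by omega
      obtain ⟨j1, hj1⟩ := sigFn_surj hcc.symm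
      obtain ⟨j2, hj2⟩ := sigFn_surj hcc
      refine Or.inr (Or.inr ⟨hgt, Finset.univ.filter fun v' => o.Adj (u',w) (u, v'), v,
        ⟨j1, hj1, ?_⟩, ⟨j2, hj2, ?_⟩, ?_⟩)
      · dsimp only
        rw [if_neg (by rw [hj1]; omega)]
        have hex : ∃ u'', G.Adj u' u'' ∧ C u'' = sigFn m (C u') j1 :=
          ⟨u, hG.symm, by rw [hj1]⟩
        rw [dif_pos hex]
        have : hex.choose = u :=
          key u' hex.choose u hex.choose_spec.1 hG.symm (hex.choose_spec.2.trans hj1)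
        rw [this]
      · dsimp only
        rw [if_pos (by rw [hj2]; omega)]
      · simp
        exact o.asymm _ _ huv
  · -- same fiber
    dsimp only at he hH
    subst he
    exact Or.inl ⟨rfl, hfH u v w huv⟩

/-- χ_o⁺(G[H]) ≤ k·(n+2^n)^(k-1)·χ_o⁺(H), where k = χ(G²), n = |V(H)|. -/
theorem upperOchrom_slex {V W : Type*} [Fintype W] (G : SimpleGraph V) (H : SimpleGraph W)
    (k : ℕ) (hk : (square G).chromaticNumber = k) :
    upperOchrom (slex G H) ≤
      k * (Fintype.card W + 2 ^ Fintype.card W) ^ (k - 1) * upperOchrom H := by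
  classical
  have hcol : (square G).Colorable k :=
    SimpleGraph.chromaticNumber_le_iff_colorable.mp (le_of_eq hk)
  obtain ⟨C⟩ := hcol
  obtain ⟨UH, hUH⟩ : ∃ UH : OrientedGraph (Fin (upperOchrom H)), ∀ o : OrientedGraph W,
      IsOrientation H o → ∃ f : W → Fin (upperOchrom H), o.IsHom UH f :=
    Nat.sInf_mem (upperSet_nonempty H)
  cases k with
  | zero =>
    have hV : IsEmpty V := ⟨fun v => (C v).elim0⟩
    have h0 : upperOchrom (slex G H) ≤ 0 := by
      apply Nat.sInf_le
      refine ⟨⟨fun _ _ => False, fun _ _ h => h.elim⟩, fun o _ => ?_⟩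
      exact ⟨fun p => (hV.false p.1).elim, fun p _ _ => (hV.false p.1).elim⟩
    exact le_trans h0 (Nat.zero_le _)
  | succ m =>
    have hle := upperOchrom_le_card (slex G H) (lexTarget m (upperOchrom H) UH W)
      (lexTarget_universal G H C UH hUH)
    refine le_trans hle (le_of_eq ?_)
    simp only [Fintype.card_prod, Fintype.card_fun, Fintype.card_sum,
      Fintype.card_finset, Fintype.card_fin, Nat.add_sub_cancel]
    ring
end
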